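/- The set of parameters α ∈ (0,1) for which the flipped α-continued fraction map T_α does not have the matching property (i.e., there exist no non-negative integers M, N with T_α^M(α) = T_α^N(1-α)) has Lebesgue measure zero. -/

import Mathlib

open Set MeasureTheory Filter Topology
open scoped Classical

/-- The Gauss map `G(x) = 1/x - ⌊1/x⌋`. -/
noncomputable def gauss (x : ℝ) : ℝ := Int.fract (1 / x)

/-- The flipped region `D_α = ⋃_{n ≥ 1} [1/(n+α), 1/n]`. -/
def Dset (α : ℝ) : Set ℝ := ⋃ n : ℕ, Set.Icc (1 / ((n : ℝ) + 1 + α)) (1 / ((n : ℝ) + 1))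

/-- The flipped α-continued fraction map `T_α`. -/
noncomputable def T (α x : ℝ) : ℝ := if x ∈ Dset α then 1 - gauss x else gauss x

/-!
For `α < 1/2` matching is immediate: `T_α α = T_α² (1 - α)`. For irrational `α > 1/2`, `T_α x`
depends only on `G x`, so without matching the sets of Gauss values along the orbits of `α` and
`1 - α` are disjoint, and each is invariant under the induced map `G ∘ flipBelow α`. They contain
`c = G α = 1/α - 1` and `G c = G (1 - α)` respectively. Whenever `p` lies in one of them and `G p`
in the other, the parabolic cascade `p ↦ 1/(1/p - 1)` carries `p` to `1/(1 + G p)`, which must be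
flipped; hence `G p ≥ c` and `G² p` lies in the set of `p`. Inductively the whole Gauss orbit of
`α` stays above `min c α`, i.e. `α` has bounded partial quotients. Numbers of bounded type form a
null set: a set covered by its images under the first `N` inverse branches of `G` would lose a
fraction `1/(N+2)` of its mass for the measure `(1 + t)⁻¹ dt`, which is invariant under `G`.
-/

lemma gauss_one_div (y : ℝ) : gauss (1 / y) = Int.fract y := by
  rw [gauss, one_div_one_div]

lemma gauss_eq_sub_natFloor {x : ℝ} (hx : 0 ≤ x) : gauss x = 1 / x - ⌊1 / x⌋₊ := by
  rw [gauss, natCast_floor_eq_intCast_floor (by positivity), Int.self_sub_floor]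

lemma gauss_nonneg (x : ℝ) : 0 ≤ gauss x := Int.fract_nonneg _

lemma gauss_lt_one (x : ℝ) : gauss x < 1 := Int.fract_lt_one _

lemma gauss_of_half_lt {x : ℝ} (h1 : 1 / 2 < x) (h2 : x ≤ 1) : gauss x = 1 / x - 1 := by
  have hx : 0 < x := by linarith
  rw [gauss, Int.fract_eq_iff]
  refine ⟨?_, ?_, 1, by push_cast; ring⟩
  · rw [sub_nonneg, le_div_iff₀ hx]; linarith
  · rw [sub_lt_iff_lt_add, div_lt_iff₀ hx]; linarith

lemma gauss_one_sub {p : ℝ} (hp0 : 0 < p) (hp : p < 1 / 2) : gauss (1 - p) = 1 / (1 / p - 1) := by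
  have : 1 - p ≠ 0 := by linarith
  rw [gauss_of_half_lt (by linarith) (by linarith)]
  field_simp
  ring

lemma gauss_one_sub_one_div_one_add {q : ℝ} (hq : 0 < q) :
    gauss (1 - 1 / (1 + q)) = gauss q := by
  have h : 1 - 1 / (1 + q) = 1 / (1 + 1 / q) := by field_simp; ring
  rw [h, gauss_one_div, Int.fract_one_add, gauss]

lemma measurable_gauss : Measurable gauss := by
  unfold gauss; fun_prop

def unitIrrationals : Set ℝ := {x | Irrational x} ∩ Ioo 0 1

lemma Irrational.gauss_mem_unitIrrationals {x : ℝ} (h : Irrational x) :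
    gauss x ∈ unitIrrationals := by
  have hirr : Irrational (gauss x) := by
    rw [gauss, ← Int.self_sub_floor, one_div]
    exact h.inv.sub_intCast _
  exact ⟨hirr, (gauss_nonneg x).lt_of_ne' hirr.ne_zero, gauss_lt_one x⟩

lemma one_sub_mem_unitIrrationals {x : ℝ} (hx : x ∈ unitIrrationals) :
    1 - x ∈ unitIrrationals := by
  obtain ⟨hirr, hx0, hx1⟩ := hx
  refine ⟨?_, by linarith, by linarith⟩
  simpa using hirr.intCast_sub 1

lemma mem_Ioc_of_mem_unitIrrationals {x : ℝ} (hx : x ∈ unitIrrationals) : x ∈ Ioc 0 1 :=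
  Ioo_subset_Ioc_self hx.2

lemma mem_Dset_iff {α x : ℝ} (hα : α ∈ Ico 0 1) (hx : x ∈ Ioc 0 1) :
    x ∈ Dset α ↔ gauss x ≤ α := by
  obtain ⟨hα0, hα1⟩ := hα
  obtain ⟨hx0, hx1⟩ := hx
  have hy : 1 ≤ 1 / x := by rw [le_div_iff₀ hx0]; linarith
  have hmem : ∀ n : ℕ, x ∈ Icc (1 / ((n : ℝ) + 1 + α)) (1 / ((n : ℝ) + 1)) ↔
      (n : ℝ) + 1 ≤ 1 / x ∧ 1 / x ≤ (n : ℝ) + 1 + α := fun n => by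
    rw [mem_Icc, one_div_le (by positivity) hx0, le_one_div hx0 (by positivity), and_comm]
  simp only [Dset, mem_iUnion, hmem, gauss_eq_sub_natFloor hx0.le, sub_le_iff_le_add']
  constructor
  · rintro ⟨n, hn1, hn2⟩
    rw [(Nat.floor_eq_iff (by linarith)).2 ⟨by exact_mod_cast hn1, by push_cast; linarith⟩]
    push_cast
    linarith
  · intro h
    have h1 : 1 ≤ ⌊1 / x⌋₊ := (Nat.one_le_floor_iff _).2 hy
    refine ⟨⌊1 / x⌋₊ - 1, ?_, ?_⟩ <;> push_cast [h1] <;> simp only [sub_add_cancel]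
    · exact Nat.floor_le (by linarith)
    · linarith

noncomputable def flipBelow (α g : ℝ) : ℝ := if g ≤ α then 1 - g else g

lemma T_eq_flipBelow_gauss {α x : ℝ} (hα : α ∈ Ico 0 1) (hx : x ∈ Ioc 0 1) :
    T α x = flipBelow α (gauss x) := by
  simp only [T, flipBelow, mem_Dset_iff hα hx]

lemma flipBelow_mem_unitIrrationals (α : ℝ) {g : ℝ} (hg : g ∈ unitIrrationals) :
    flipBelow α g ∈ unitIrrationals := by
  unfold flipBelow
  split_ifs
  exacts [one_sub_mem_unitIrrationals hg, hg]

lemma mapsTo_T {α : ℝ} (hα : α ∈ Ico 0 1) : MapsTo (T α) unitIrrationals unitIrrationals :=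
  fun x hx => by
    rw [T_eq_flipBelow_gauss hα (mem_Ioc_of_mem_unitIrrationals hx)]
    exact flipBelow_mem_unitIrrationals α (hx.1 : Irrational x).gauss_mem_unitIrrationals

def gaussTrace (α x : ℝ) : Set ℝ := range fun n => gauss ((T α)^[n] x)

section Trace

variable {α x y : ℝ}

lemma gaussTrace_subset (hα : α ∈ Ico 0 1) (hx : x ∈ unitIrrationals) :
    gaussTrace α x ⊆ unitIrrationals := by
  rintro _ ⟨n, rfl⟩
  exact ((mapsTo_T hα).iterate n hx).1.gauss_mem_unitIrrationals

lemma mapsTo_gaussTrace (hα : α ∈ Ico 0 1) (hx : x ∈ unitIrrationals) :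
    MapsTo (gauss ∘ flipBelow α) (gaussTrace α x) (gaussTrace α x) := by
  rintro _ ⟨n, rfl⟩
  refine ⟨n + 1, ?_⟩
  show gauss ((T α)^[n + 1] x) = gauss (flipBelow α (gauss ((T α)^[n] x)))
  rw [Function.iterate_succ_apply', T_eq_flipBelow_gauss hα
    (mem_Ioc_of_mem_unitIrrationals ((mapsTo_T hα).iterate n hx))]

lemma disjoint_gaussTrace (hα : α ∈ Ico 0 1) (hx : x ∈ unitIrrationals) (hy : y ∈ unitIrrationals)
    (h : ¬ ∃ M N : ℕ, (T α)^[M] x = (T α)^[N] y) :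
    Disjoint (gaussTrace α x) (gaussTrace α y) := by
  rw [Set.disjoint_left]
  rintro _ ⟨M, rfl⟩ ⟨N, hN⟩
  refine h ⟨M + 1, N + 1, ?_⟩
  rw [Function.iterate_succ_apply', Function.iterate_succ_apply',
    T_eq_flipBelow_gauss hα (mem_Ioc_of_mem_unitIrrationals ((mapsTo_T hα).iterate M hx)),
    T_eq_flipBelow_gauss hα (mem_Ioc_of_mem_unitIrrationals ((mapsTo_T hα).iterate N hy))]
  exact congrArg (flipBelow α) hN.symm

end Trace

section Cascade

variable {α : ℝ}

lemma iterate_gauss_comp_flipBelow (hα : 1 / 2 < α) (i : ℕ) {p : ℝ} (hp : 0 < p)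
    (hi : (i : ℝ) + 1 < 1 / p) :
    (gauss ∘ flipBelow α)^[i] p = 1 / (1 / p - i) := by
  induction i generalizing p with
  | zero => simp
  | succ i ih =>
    push_cast at hi
    have hp2 : p < 1 / 2 := by
      rw [lt_one_div hp two_pos]
      linarith [(i.cast_nonneg : (0 : ℝ) ≤ i)]
    have hflip : (gauss ∘ flipBelow α) p = 1 / (1 / p - 1) := by
      rw [Function.comp_apply, flipBelow, if_pos (by linarith), gauss_one_sub hp hp2]
    rw [Function.iterate_succ_apply, hflip, ih (one_div_pos.2 (by linarith))
      (by rw [one_div_one_div]; linarith), one_div_one_div]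
    push_cast
    ring

lemma exists_iterate_gauss_comp_flipBelow_eq (hα : 1 / 2 < α) {p : ℝ} (hp : p ∈ Ioo 0 1)
    (hq : gauss p ≠ 0) : ∃ i, (gauss ∘ flipBelow α)^[i] p = 1 / (1 + gauss p) := by
  have hp0 := hp.1
  have hd : 1 ≤ ⌊1 / p⌋₊ := (Nat.one_le_floor_iff _).2 (by rw [le_div_iff₀ hp0]; linarith [hp.2])
  have hcast : ((⌊1 / p⌋₊ - 1 : ℕ) : ℝ) = ⌊1 / p⌋₊ - 1 := by push_cast [hd]; ring
  refine ⟨⌊1 / p⌋₊ - 1, ?_⟩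
  rw [iterate_gauss_comp_flipBelow hα _ hp0, hcast, gauss_eq_sub_natFloor hp0.le]
  · ring_nf
  · rw [hcast]
    linarith [(gauss_nonneg p).lt_of_ne' hq, gauss_eq_sub_natFloor hp0.le]

lemma gauss_gauss_mem_and_le (hα : 1 / 2 < α) {A B : Set ℝ}
    (hA : MapsTo (gauss ∘ flipBelow α) A A) (hAB : Disjoint A B) {p : ℝ} (hpA : p ∈ A)
    (hp : p ∈ Ioo 0 1) (hqB : gauss p ∈ B) (hq : 0 < gauss p) :
    gauss (gauss p) ∈ A ∧ 1 / α - 1 ≤ gauss p := by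
  set q := gauss p
  obtain ⟨i, hi⟩ := exists_iterate_gauss_comp_flipBelow_eq hα hp hq.ne'
  have hmem : 1 / (1 + q) ∈ A := hi ▸ hA.iterate i hpA
  -- left unflipped, `1 / (1 + q)` would be sent back to `q ∈ B`
  have hle : 1 / (1 + q) ≤ α := by
    by_contra hgt
    have h := hA hmem
    rw [Function.comp_apply, flipBelow, if_neg hgt, gauss_one_div, Int.fract_one_add,
      Int.fract_eq_self.2 ⟨hq.le, gauss_lt_one p⟩] at h
    exact hAB.ne_of_mem h hqB rfl
  constructor
  · have h := hA hmem
    rwa [Function.comp_apply, flipBelow, if_pos hle, gauss_one_sub_one_div_one_add hq] at h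
  · rw [div_le_iff₀ (by linarith)] at hle
    rw [sub_le_iff_le_add', div_le_iff₀ (by linarith)]
    linarith

lemma le_gauss_iterate_succ (hα : 1 / 2 < α) {A B : Set ℝ}
    (hA : MapsTo (gauss ∘ flipBelow α) A A) (hB : MapsTo (gauss ∘ flipBelow α) B B)
    (hAB : Disjoint A B) (hAU : A ⊆ unitIrrationals) (hBU : B ⊆ unitIrrationals) {p : ℝ}
    (hpA : p ∈ A) (hqB : gauss p ∈ B) (k : ℕ) : 1 / α - 1 ≤ gauss^[k + 1] p := by
  induction k generalizing p A B with
  | zero => exact (gauss_gauss_mem_and_le hα hA hAB hpA (hAU hpA).2 hqB (hBU hqB).2.1).2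
  | succ k ih =>
    rw [Function.iterate_succ_apply]
    exact ih hB hA hAB.symm hBU hAU hqB
      (gauss_gauss_mem_and_le hα hA hAB hpA (hAU hpA).2 hqB (hBU hqB).2.1).1

end Cascade

lemma T_iterate_one_eq_T_iterate_two {α : ℝ} (hα0 : 0 < α) (hα : α < 1 / 2) :
    (T α)^[1] α = (T α)^[2] (1 - α) := by
  have hα' : α ∈ Ico 0 1 := ⟨hα0.le, by linarith⟩
  set w := 1 / (1 / α - 1)
  have hw' : 1 / w = 1 / α - 1 := one_div_one_div _
  have h1 : 1 < 1 / w := by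
    rw [hw', lt_sub_iff_add_lt, lt_one_div (by norm_num) hα0]; linarith
  have hw0 : 0 < w := one_div_pos.1 (by linarith)
  have hw1 : w ∈ Ioc 0 1 := ⟨hw0, (lt_of_one_div_lt_one_div one_pos (by rwa [div_one])).le⟩
  have hgt : ¬ w ≤ α := not_le.2 ((one_div_lt_one_div hw0 hα0).1 (by linarith))
  have hT : T α (1 - α) = w := by
    rw [T_eq_flipBelow_gauss hα' ⟨by linarith, by linarith⟩, gauss_one_sub hα0 hα, flipBelow,
      if_neg hgt]
  have hgw : gauss w = gauss α := by rw [gauss, hw', Int.fract_sub_one, gauss]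
  show T α α = T α (T α (1 - α))
  rw [hT, T_eq_flipBelow_gauss hα' hw1, T_eq_flipBelow_gauss hα' ⟨hα0, by linarith⟩, hgw]

def boundedType (ε : ℝ) : Set ℝ := {x | ∀ j : ℕ, gauss^[j] x ∈ Icc ε 1}

lemma exists_mem_boundedType_of_not_matching {α : ℝ} (hα : 1 / 2 < α) (hα1 : α < 1)
    (hirr : Irrational α) (h : ¬ ∃ M N : ℕ, (T α)^[M] α = (T α)^[N] (1 - α)) :
    ∃ n : ℕ, α ∈ boundedType (1 / (n + 1)) := by
  have hα' : α ∈ Ico 0 1 := ⟨by linarith, hα1⟩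
  have hαU : α ∈ unitIrrationals := ⟨hirr, by linarith, hα1⟩
  have hαU' := one_sub_mem_unitIrrationals hαU
  set c := gauss α
  have hc : c = 1 / α - 1 := gauss_of_half_lt hα hα1.le
  have hcU : c ∈ unitIrrationals := hirr.gauss_mem_unitIrrationals
  have hgc : gauss c = gauss (1 - α) := by
    have : α = 1 / (1 + c) := by rw [hc, add_sub_cancel, one_div_one_div]
    rw [this, gauss_one_sub_one_div_one_add hcU.2.1]
  have hkey := le_gauss_iterate_succ hα (mapsTo_gaussTrace hα' hαU) (mapsTo_gaussTrace hα' hαU')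
    (disjoint_gaussTrace hα' hαU hαU' h) (gaussTrace_subset hα' hαU)
    (gaussTrace_subset hα' hαU') (⟨0, rfl⟩ : c ∈ gaussTrace α α)
    (⟨0, hgc.symm⟩ : gauss c ∈ gaussTrace α (1 - α))
  obtain ⟨n, hn⟩ := exists_nat_one_div_lt (lt_min hcU.2.1 (by linarith : 0 < α))
  have hnc : 1 / ((n : ℝ) + 1) ≤ c := (hn.trans_le (min_le_left _ _)).le
  refine ⟨n, fun j => ⟨?_, ?_⟩⟩
  · rcases j with _ | _ | k
    · exact (hn.trans_le (min_le_right _ _)).le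
    · exact hnc
    · rw [Function.iterate_succ_apply]
      exact hnc.trans (hc ▸ hkey k)
  · rcases j with _ | j
    · exact hα1.le
    · rw [Function.iterate_succ_apply']
      exact (gauss_lt_one _).le

lemma ENNReal.eq_zero_of_le_mul_of_lt_one {a q : ENNReal} (hq : q < 1) (ha : a ≠ ⊤)
    (h : a ≤ q * a) : a = 0 := by
  by_contra h0
  have hlt := (ENNReal.mul_lt_mul_iff_left h0 ha).2 hq
  rw [one_mul] at hlt
  exact (h.trans_lt hlt).false

noncomputable def gaussBranch (n : ℕ) (t : ℝ) : ℝ := ((n : ℝ) + 1 + t)⁻¹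

lemma gaussBranch_injective (n : ℕ) : Function.Injective (gaussBranch n) :=
  fun _ _ h => add_left_cancel (inv_injective h)

lemma hasDerivAt_gaussBranch (n : ℕ) {t : ℝ} (ht : 0 ≤ t) :
    HasDerivAt (gaussBranch n) (-1 / ((n : ℝ) + 1 + t) ^ 2) t :=
  ((hasDerivAt_id t).const_add ((n : ℝ) + 1)).inv (by positivity)

lemma gaussBranch_gauss {x : ℝ} (hx : x ∈ Ioc 0 1) : gaussBranch (⌊1 / x⌋₊ - 1) (gauss x) = x := by
  have hd : 1 ≤ ⌊1 / x⌋₊ := (Nat.one_le_floor_iff _).2 (by rw [le_div_iff₀ hx.1]; linarith [hx.2])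
  rw [gaussBranch, gauss_eq_sub_natFloor hx.1.le]
  push_cast [hd]
  ring_nf
  rw [inv_inv]

lemma lintegral_image_gaussBranch (n : ℕ) {A : Set ℝ} (hA : MeasurableSet A) (hA0 : A ⊆ Ici 0) :
    ∫⁻ t in gaussBranch n '' A, ENNReal.ofReal (1 + t)⁻¹ =
      ∫⁻ t in A, ENNReal.ofReal (((n : ℝ) + 1 + t) * ((n : ℝ) + 2 + t))⁻¹ := by
  rw [lintegral_image_eq_lintegral_abs_deriv_mul hA
    (fun t ht => (hasDerivAt_gaussBranch n (hA0 ht)).hasDerivWithinAt)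
    (gaussBranch_injective n).injOn]
  refine setLIntegral_congr_fun hA fun t ht => ?_
  have ht0 : 0 ≤ t := hA0 ht
  rw [← ENNReal.ofReal_mul (abs_nonneg _), gaussBranch, neg_div, abs_neg,
    abs_of_pos (by positivity)]
  congr 1
  field_simp
  ring

lemma sum_range_inv_mul_inv {t : ℝ} (ht : 0 ≤ t) (N : ℕ) :
    ∑ n ∈ Finset.range N, (((n : ℝ) + 1 + t) * ((n : ℝ) + 2 + t))⁻¹ =
      (1 + t)⁻¹ - ((N : ℝ) + 1 + t)⁻¹ := by
  induction N with
  | zero => simp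
  | succ N ih =>
    rw [Finset.sum_range_succ, ih]
    push_cast
    field_simp
    ring

lemma sum_range_inv_mul_inv_le {t : ℝ} (ht : 0 ≤ t) (N : ℕ) :
    ∑ n ∈ Finset.range N, (((n : ℝ) + 1 + t) * ((n : ℝ) + 2 + t))⁻¹ ≤
      (1 - ((N : ℝ) + 2)⁻¹) * (1 + t)⁻¹ := by
  rw [sum_range_inv_mul_inv ht, sub_mul, one_mul, sub_le_sub_iff_left, ← mul_inv]
  exact inv_anti₀ (by positivity) (by nlinarith)

lemma volume_eq_zero_of_subset_biUnion_gaussBranch {A : Set ℝ} (hA : MeasurableSet A)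
    (hA01 : A ⊆ Icc 0 1) (N : ℕ) (hcov : A ⊆ ⋃ n ∈ Finset.range N, gaussBranch n '' A) :
    volume A = 0 := by
  set ρ : ℝ → ENNReal := fun t => ENNReal.ofReal (1 + t)⁻¹
  have hρ : Measurable ρ := by fun_prop
  set μ := volume.withDensity ρ
  have hA0 : A ⊆ Ici 0 := fun t ht => (hA01 ht).1
  have hcontract : μ A ≤ ENNReal.ofReal (1 - ((N : ℝ) + 2)⁻¹) * μ A := calc
    μ A ≤ ∑ n ∈ Finset.range N, μ (gaussBranch n '' A) :=
      (measure_mono hcov).trans (measure_biUnion_finset_le _ _)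
    _ = ∫⁻ t in A, ∑ n ∈ Finset.range N,
          ENNReal.ofReal (((n : ℝ) + 1 + t) * ((n : ℝ) + 2 + t))⁻¹ := by
      rw [lintegral_finsetSum _ fun n _ => by fun_prop]
      simp only [μ, withDensity_apply', ρ, lintegral_image_gaussBranch _ hA hA0]
    _ ≤ ∫⁻ t in A, ENNReal.ofReal (1 - ((N : ℝ) + 2)⁻¹) * ρ t := by
      refine setLIntegral_mono (by fun_prop) fun t ht => ?_
      have ht0 : 0 ≤ t := hA0 ht
      rw [← ENNReal.ofReal_sum_of_nonneg fun n _ => by positivity,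
        ← ENNReal.ofReal_mul (sub_nonneg.2 (inv_le_one_of_one_le₀ (by linarith)))]
      exact ENNReal.ofReal_le_ofReal (sum_range_inv_mul_inv_le ht0 N)
    _ = ENNReal.ofReal (1 - ((N : ℝ) + 2)⁻¹) * μ A := by
      rw [lintegral_const_mul _ hρ, withDensity_apply _ hA]
  have hfin : μ A ≠ ⊤ := by
    refine ne_top_of_le_ne_top (measure_Icc_lt_top (μ := volume) (a := (0 : ℝ)) (b := 1)).ne ?_
    rw [withDensity_apply _ hA, ← setLIntegral_one]
    refine (setLIntegral_mono measurable_const fun t ht => ?_).trans (lintegral_mono_set hA01)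
    exact ENNReal.ofReal_le_one.2 (inv_le_one_of_one_le₀ (by linarith [(hA01 ht).1]))
  have hμ := ENNReal.eq_zero_of_le_mul_of_lt_one
    (ENNReal.ofReal_lt_one.2 (sub_lt_self 1 (by positivity)))
    hfin hcontract
  rwa [withDensity_apply_eq_zero hρ, inter_eq_right.2 fun t ht => ?_] at hμ
  have ht0 : 0 ≤ t := hA0 ht
  show ENNReal.ofReal (1 + t)⁻¹ ≠ 0
  rw [ne_eq, ENNReal.ofReal_eq_zero, not_le]
  positivity

lemma measurableSet_boundedType (ε : ℝ) : MeasurableSet (boundedType ε) := by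
  have : boundedType ε = ⋂ j : ℕ, gauss^[j] ⁻¹' Icc ε 1 := by ext; simp [boundedType]
  rw [this]
  exact MeasurableSet.iInter fun j => measurable_gauss.iterate j measurableSet_Icc

lemma boundedType_subset_biUnion_gaussBranch {ε : ℝ} (hε : 0 < ε) :
    boundedType ε ⊆ ⋃ n ∈ Finset.range ⌊1 / ε⌋₊, gaussBranch n '' boundedType ε := by
  intro x hx
  have hx0 : x ∈ Icc ε 1 := hx 0
  have hd : 1 ≤ ⌊1 / x⌋₊ :=
    (Nat.one_le_floor_iff _).2 (by rw [le_div_iff₀ (hε.trans_le hx0.1)]; linarith [hx0.2])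
  have hdε : ⌊1 / x⌋₊ ≤ ⌊1 / ε⌋₊ := Nat.floor_le_floor (one_div_le_one_div_of_le hε hx0.1)
  refine mem_iUnion₂.2 ⟨⌊1 / x⌋₊ - 1, Finset.mem_range.2 (by omega), gauss x, fun j => ?_,
    gaussBranch_gauss ⟨hε.trans_le hx0.1, hx0.2⟩⟩
  rw [← Function.iterate_succ_apply]
  exact hx (j + 1)

lemma volume_boundedType {ε : ℝ} (hε : 0 < ε) : volume (boundedType ε) = 0 :=
  volume_eq_zero_of_subset_biUnion_gaussBranch (measurableSet_boundedType ε)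
    (fun _ hx => Icc_subset_Icc_left hε.le (hx 0)) _ (boundedType_subset_biUnion_gaussBranch hε)

/-- the set of `α ∈ (0,1)` for which `T_α` does not have the
matching property has Lebesgue measure zero. -/
theorem stmt_10 :
    MeasureTheory.volume
      {α : ℝ | α ∈ Set.Ioo (0:ℝ) 1 ∧
        ¬ ∃ M N : ℕ, (T α)^[M] α = (T α)^[N] (1 - α)} = 0 := by
  refine measure_mono_null (t := range ((↑) : ℚ → ℝ) ∪ ⋃ n : ℕ, boundedType (1 / (n + 1)))
    ?_ ?_
  · rintro α ⟨hα, hNM⟩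
    by_cases hirr : Irrational α
    · right
      rcases lt_trichotomy α (1 / 2) with hlt | heq | hgt
      · exact absurd ⟨1, 2, T_iterate_one_eq_T_iterate_two hα.1 hlt⟩ hNM
      · exact absurd (by rw [heq]; norm_num) (hirr.ne_rat (1 / 2))
      · exact mem_iUnion.2 (exists_mem_boundedType_of_not_matching hgt hα.2 hirr hNM)
    · exact Or.inl (not_not.1 hirr)
  · exact measure_union_null ((countable_range _).measure_zero _)
      (measure_iUnion_null fun n => volume_boundedType (by positivity))
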